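/- Let Λ_1, ..., Λ_n be i.i.d. Bernoulli(π) with π ∈ (0,1). Then limsup_{n→∞} E[ n² / ((n − Σ_{i=1}^n Λ_i) ∨ 1)² ] ≤ 1/(1−π)², and in particular this sequence of expectations is bounded. -/

import Mathlib

open MeasureTheory ProbabilityTheory Filter
open scoped ENNReal Classical BigOperators

noncomputable section

variable {Ω : Type*}

/-- The Bernoulli(π) law on ℝ, i.e. `(1-π)δ₀ + πδ₁`. -/
def bernoulliLaw (π : ℝ) : Measure ℝ :=
  ENNReal.ofReal (1 - π) • Measure.dirac (0 : ℝ) + ENNReal.ofReal π • Measure.dirac 1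

/-!
Each `Λ i` takes values in `[0, 1]` and has mean `π`. Fix `0 < ε < 1 - π`. Off the event
`{∑ Λ i ≥ n (π + ε)}` the integrand is at most `1 / (1 - π - ε)²`, and everywhere it is at most
`n²`. By Hoeffding's inequality the event has probability at most `exp (-2 n ε²)`, so the
expectation is at most `1 / (1 - π - ε)² + n² exp (-2 n ε²)`, whose second term tends to `0`.
Letting `ε → 0` bounds the limsup, and the case `ε = (1 - π) / 2` bounds every term.
-/

open Set Finset Topology

section Bernoulli

variable [MeasurableSpace Ω] {P : Measure Ω} {X : Ω → ℝ} {π : ℝ}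

lemma ae_mem_Icc_of_map_eq_bernoulliLaw (hX : AEMeasurable X P)
    (hlaw : P.map X = bernoulliLaw π) : ∀ᵐ ω ∂P, X ω ∈ Icc (0 : ℝ) 1 := by
  have h01 : ∀ᵐ x ∂bernoulliLaw π, x ∈ Icc (0 : ℝ) 1 := by
    refine ae_add_measure_iff.2 ⟨?_, ?_⟩ <;>
      exact Measure.ae_smul_measure (ae_dirac_iff measurableSet_Icc |>.2 (by norm_num)) _
  rw [← hlaw] at h01
  exact ae_of_ae_map hX h01

lemma integral_eq_of_map_eq_bernoulliLaw (hX : AEMeasurable X P) (hπ0 : 0 ≤ π)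
    (hlaw : P.map X = bernoulliLaw π) : P[X] = π := by
  rw [← integral_map (f := fun x => x) hX aestronglyMeasurable_id, hlaw, bernoulliLaw,
    integral_add_measure ((integrable_dirac (by simp)).smul_measure ENNReal.ofReal_ne_top)
      ((integrable_dirac (by simp)).smul_measure ENNReal.ofReal_ne_top)]
  simp [hπ0]

end Bernoulli

lemma sq_div_sq_max_one_le {x y c : ℝ} (hx : 0 ≤ x) (hc : 0 < c) (h : c * x ≤ y) :
    x ^ 2 / max y 1 ^ 2 ≤ 1 / c ^ 2 := by
  have hy : c * x ≤ max y 1 := h.trans (le_max_left _ _)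
  rw [div_le_div_iff₀ (by positivity) (by positivity)]
  nlinarith [mul_nonneg hc.le hx]

lemma sq_div_sq_max_one_le_sq (x y : ℝ) : x ^ 2 / max y 1 ^ 2 ≤ x ^ 2 :=
  div_le_self (sq_nonneg x) (one_le_pow₀ (le_max_right y 1))

lemma integral_le_add_mul_measureReal [MeasurableSpace Ω] {P : Measure Ω}
    [IsProbabilityMeasure P] {f : Ω → ℝ} {s : Set Ω} (hs : MeasurableSet s) {a M : ℝ}
    (ha : 0 ≤ a) (hf : 0 ≤ᵐ[P] f) (hfa : ∀ ω ∉ s, f ω ≤ a) (hfM : ∀ ω ∈ s, f ω ≤ M) :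
    ∫ ω, f ω ∂P ≤ a + M * P.real s := by
  have hle : ∀ ω, f ω ≤ a + s.indicator (fun _ ↦ M) ω := by
    intro ω
    by_cases hω : ω ∈ s
    · simp only [indicator_of_mem hω]; linarith [hfM ω hω]
    · simp only [indicator_of_notMem hω, add_zero]; exact hfa ω hω
  calc ∫ ω, f ω ∂P ≤ ∫ ω, (a + s.indicator (fun _ ↦ M) ω) ∂P :=
        integral_mono_of_nonneg hf ((integrable_const a).add
          ((integrable_const M).indicator hs)) (ae_of_all _ hle)
    _ = a + M * P.real s := by
        rw [integral_add (integrable_const a) ((integrable_const M).indicator hs),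
          integral_indicator_const M hs]
        simp [mul_comm]

section UnitIntervalValued

variable [MeasurableSpace Ω] {P : Measure Ω} [IsProbabilityMeasure P] {Λ : ℕ → Ω → ℝ} {π : ℝ}

lemma measureReal_sum_range_ge_le_of_mem_Icc (hmeas : ∀ i, AEMeasurable (Λ i) P)
    (hindep : iIndepFun Λ P) (hIcc : ∀ i, ∀ᵐ ω ∂P, Λ i ω ∈ Icc (0 : ℝ) 1)
    (hmean : ∀ i, P[Λ i] = π) {ε : ℝ} (hε : 0 ≤ ε) (n : ℕ) :
    P.real {ω | n * (π + ε) ≤ ∑ i ∈ range n, Λ i ω} ≤ Real.exp (-2 * ε ^ 2) ^ n := by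
  have hsubG : ∀ i < n, HasSubgaussianMGF (fun ω ↦ Λ i ω - π) ((‖(1 : ℝ) - 0‖₊ / 2) ^ 2) P :=
    fun i _ ↦ hmean i ▸ hasSubgaussianMGF_of_mem_Icc (hmeas i) (hIcc i)
  have hcentered : iIndepFun (fun i ω ↦ Λ i ω - π) P :=
    hindep.comp (fun _ x ↦ x - π) fun _ ↦ measurable_id.sub_const π
  have hoeffding := HasSubgaussianMGF.measure_sum_range_ge_le_of_iIndepFun hcentered hsubG
    (mul_nonneg n.cast_nonneg hε)
  have hevent : {ω | n * (π + ε) ≤ ∑ i ∈ range n, Λ i ω} =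
      {ω | n * ε ≤ ∑ i ∈ range n, (Λ i ω - π)} := by
    ext ω
    simp only [mem_ofPred_eq, sum_sub_distrib, sum_const, card_range, nsmul_eq_mul]
    constructor <;> intro h <;> linarith
  rw [hevent, ← Real.exp_nat_mul]
  refine hoeffding.trans_eq (congrArg Real.exp ?_)
  rcases n.eq_zero_or_pos with rfl | hn
  · simp
  · norm_num
    field_simp
    ring

lemma integral_sq_div_sq_max_one_le (hmeas : ∀ i, Measurable (Λ i)) (hindep : iIndepFun Λ P)
    (hIcc : ∀ i, ∀ᵐ ω ∂P, Λ i ω ∈ Icc (0 : ℝ) 1) (hmean : ∀ i, P[Λ i] = π) {ε : ℝ}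
    (hε : 0 ≤ ε) (hεπ : ε < 1 - π) (n : ℕ) :
    ∫ ω, (n : ℝ) ^ 2 / max ((n : ℝ) - ∑ i ∈ range n, Λ i ω) 1 ^ 2 ∂P ≤
      1 / (1 - π - ε) ^ 2 + (n : ℝ) ^ 2 * Real.exp (-2 * ε ^ 2) ^ n := by
  have hs : MeasurableSet {ω | n * (π + ε) ≤ ∑ i ∈ range n, Λ i ω} :=
    measurableSet_le measurable_const (Finset.measurable_sum _ fun i _ ↦ hmeas i)
  refine (integral_le_add_mul_measureReal hs (a := 1 / (1 - π - ε) ^ 2) (by positivity)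
    (ae_of_all _ fun ω ↦ by positivity) (fun ω hω ↦ ?_)
    (fun ω _ ↦ sq_div_sq_max_one_le_sq (n : ℝ) _)).trans ?_
  · refine sq_div_sq_max_one_le n.cast_nonneg (by linarith) ?_
    simp only [mem_ofPred_eq, not_le] at hω
    linarith
  · gcongr
    exact measureReal_sum_range_ge_le_of_mem_Icc (fun i ↦ (hmeas i).aemeasurable) hindep hIcc
      hmean hε n

end UnitIntervalValued

lemma limsup_le_of_le_add_of_tendsto_zero {u w : ℕ → ℝ} {a : ℝ}
    (hu : IsCoboundedUnder (· ≤ ·) atTop u) (hw : Tendsto w atTop (𝓝 0))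
    (h : ∀ n, u n ≤ a + w n) : limsup u atTop ≤ a := by
  have hlim : Tendsto (fun n ↦ a + w n) atTop (𝓝 a) := by
    simpa using tendsto_const_nhds.add hw
  calc limsup u atTop ≤ limsup (fun n ↦ a + w n) atTop :=
        limsup_le_limsup (Eventually.of_forall h) hu hlim.isBoundedUnder_le
    _ = a := hlim.limsup_eq

/-- for i.i.d. Bernoulli(π) variables,
`limsup_n E[ n² / ((n − ΣΛᵢ) ∨ 1)² ] ≤ 1/(1−π)²`, and in particular the expectations
are bounded. -/
theorem stmt6 [MeasurableSpace Ω] (P : Measure Ω) [IsProbabilityMeasure P]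
    (Λ : ℕ → Ω → ℝ) (hmeas : ∀ i, Measurable (Λ i))
    (π : ℝ) (hπ : π ∈ Set.Ioo (0 : ℝ) 1)
    (hiid : iIndepFun Λ P)
    (hlaw : ∀ i, Measure.map (Λ i) P = bernoulliLaw π) :
    limsup (fun n : ℕ =>
        ∫ ω, (n : ℝ) ^ 2 / (max ((n : ℝ) - ∑ i ∈ Finset.range n, Λ i ω) 1) ^ 2 ∂P)
      atTop ≤ 1 / (1 - π) ^ 2 ∧
    ∃ C : ℝ, ∀ n : ℕ,
      (∫ ω, (n : ℝ) ^ 2 / (max ((n : ℝ) - ∑ i ∈ Finset.range n, Λ i ω) 1) ^ 2 ∂P) ≤ C := by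
  set u : ℕ → ℝ := fun n ↦
    ∫ ω, (n : ℝ) ^ 2 / (max ((n : ℝ) - ∑ i ∈ Finset.range n, Λ i ω) 1) ^ 2 ∂P
  have hbound : ∀ ε, 0 ≤ ε → ε < 1 - π → ∀ n, u n ≤ 1 / (1 - π - ε) ^ 2 +
      (n : ℝ) ^ 2 * Real.exp (-2 * ε ^ 2) ^ n :=
    fun ε hε hεπ ↦ integral_sq_div_sq_max_one_le hmeas hiid
      (fun i ↦ ae_mem_Icc_of_map_eq_bernoulliLaw (hmeas i).aemeasurable (hlaw i))
      (fun i ↦ integral_eq_of_map_eq_bernoulliLaw (hmeas i).aemeasurable hπ.1.le (hlaw i)) hε hεπ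
  have hdecay : ∀ ε, 0 < ε → Tendsto (fun n : ℕ ↦ (n : ℝ) ^ 2 * Real.exp (-2 * ε ^ 2) ^ n)
      atTop (𝓝 0) := fun ε hε ↦
    tendsto_pow_const_mul_const_pow_of_lt_one 2 (Real.exp_pos _).le
      (Real.exp_lt_one_iff.2 (by nlinarith))
  constructor
  · have hcob : IsCoboundedUnder (· ≤ ·) atTop u :=
      isCoboundedUnder_le_of_le atTop fun n ↦ integral_nonneg fun ω ↦ by positivity
    have hlim : Tendsto (fun ε : ℝ ↦ 1 / (1 - π - ε) ^ 2) (𝓝[>] 0) (𝓝 (1 / (1 - π) ^ 2)) := by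
      have hcont : ContinuousAt (fun ε : ℝ ↦ 1 / (1 - π - ε) ^ 2) 0 :=
        continuousAt_const.div (by fun_prop) (pow_ne_zero 2 (by linarith [hπ.2]))
      simpa using hcont.tendsto.mono_left nhdsWithin_le_nhds
    refine ge_of_tendsto hlim ?_
    filter_upwards [Ioo_mem_nhdsGT (show (0 : ℝ) < 1 - π by linarith [hπ.2])] with ε hε
    exact limsup_le_of_le_add_of_tendsto_zero hcob (hdecay ε hε.1) (hbound ε hε.1.le hε.2)
  · have hε : 0 < (1 - π) / 2 := by linarith [hπ.2]
    obtain ⟨B, hB⟩ := (hdecay _ hε).bddAbove_range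
    exact ⟨_, fun n ↦ (hbound _ hε.le (by linarith) n).trans
      (add_le_add_right (hB (mem_range_self n)) _)⟩
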